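/- arXiv:1508.07256 — 2 statements merged into one kernel-verified Lean document; each statement's English description precedes it below -/
import Mathlib

section
/- Suppose K is an infinite clique (complete graph on an infinite vertex set), and R is a directed graph with V(R) = V(K) in which every vertex has infinite outdegree. Then there exists a 1-shallow topological minor model β̃ of the countably infinite clique K_ω in K such that for each edge pq of K_ω, the path β̃(pq) is compatible with R: it is a path β̃(p)−x−y−β̃(q) of length three with (β̃(p), x) ∈ E(R) and (β̃(q), y) ∈ E(R). -/
namespace NWD

open SimpleGraph Filter

/-! ### Shallow minors -/

/-- A `d`-shallow minor model of `H` in `G`: a family of pairwise disjoint branch sets,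
each connected of radius at most `d` (witnessed by a center joined to every vertex of the
branch set by a walk of length at most `d` inside the branch set), such that every edge of `H`
is realized by an edge of `G` between the corresponding branch sets. -/
def IsShallowMinorModel {V W : Type} (G : SimpleGraph V) (H : SimpleGraph W) (d : ℕ)
    (α : W → G.Subgraph) : Prop :=
  (∀ w : W, ∃ c : (α w).verts, ∀ x : (α w).verts, ∃ p : (α w).coe.Walk c x, p.length ≤ d) ∧
  (∀ w w' : W, w ≠ w' → Disjoint (α w).verts (α w').verts) ∧
  (∀ w w' : W, H.Adj w w' → ∃ x ∈ (α w).verts, ∃ y ∈ (α w').verts, G.Adj x y)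

/-- `H` is a shallow minor of `G` at depth `d`. -/
def IsShallowMinor {V W : Type} (G : SimpleGraph V) (H : SimpleGraph W) (d : ℕ) : Prop :=
  ∃ α : W → G.Subgraph, IsShallowMinorModel G H d α

/-! ### Topological shallow minors -/

/-- A `d`-shallow topological minor model of `H` in `G`: an injective map `f` on vertices
together with, for every edge `uv` of `H`, a path of length at most `2d+1` in `G` from `f u`
to `f v`; the paths are pairwise vertex-disjoint apart from possibly sharing endpoints. -/
def IsTopMinorModel {V W : Type} (G : SimpleGraph V) (H : SimpleGraph W) (d : ℕ)
    (f : W → V) (P : ∀ ⦃u v : W⦄, H.Adj u v → G.Walk (f u) (f v)) : Prop :=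
  Function.Injective f ∧
  (∀ ⦃u v : W⦄ (h : H.Adj u v), (P h).IsPath) ∧
  (∀ ⦃u v : W⦄ (h : H.Adj u v), (P h).length ≤ 2 * d + 1) ∧
  (∀ ⦃u v : W⦄ (h : H.Adj u v), P h.symm = (P h).reverse) ∧
  (∀ ⦃u v u' v' : W⦄ (h : H.Adj u v) (h' : H.Adj u' v'), s(u, v) ≠ s(u', v') →
    ∀ x : V, x ∈ (P h).support → x ∈ (P h').support →
      (x = f u ∨ x = f v) ∧ (x = f u' ∨ x = f v'))

/-- `H` is a topological shallow minor of `G` at depth `d`. -/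
def IsTopShallowMinor {V W : Type} (G : SimpleGraph V) (H : SimpleGraph W) (d : ℕ) : Prop :=
  ∃ (f : W → V) (P : ∀ ⦃u v : W⦄, H.Adj u v → G.Walk (f u) (f v)),
    IsTopMinorModel G H d f P

/-! ### Ultraproducts of graphs -/

/-- The setoid identifying sequences agreeing on a set of the ultrafilter. -/
def prodSetoid (U : Ultrafilter ℕ) (Vs : ℕ → Type) : Setoid (∀ n, Vs n) where
  r g h := ∀ᶠ n in (U : Filter ℕ), g n = h n
  iseqv := by
    constructor
    · intro g; exact Eventually.of_forall fun n => rfl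
    · intro g h hg; exact hg.mono fun n hn => hn.symm
    · intro g h k h1 h2; filter_upwards [h1, h2] with n e1 e2; rw [e1, e2]

/-- The vertex set of the ultraproduct. -/
def UVertex (U : Ultrafilter ℕ) (Vs : ℕ → Type) : Type := Quotient (prodSetoid U Vs)

/-- The ultraproduct of a sequence of graphs along the ultrafilter `U`. -/
def UGraph (U : Ultrafilter ℕ) {Vs : ℕ → Type} (Gs : ∀ n, SimpleGraph (Vs n)) :
    SimpleGraph (UVertex U Vs) where
  Adj x y := Quotient.liftOn₂ x y
    (fun g h => ∀ᶠ n in (U : Filter ℕ), (Gs n).Adj (g n) (h n))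
    (by
      intro a b a' b' ha hb
      apply propext
      constructor
      · intro hadj; filter_upwards [hadj, ha, hb] with n h1 h2 h3; rw [← h2, ← h3]; exact h1
      · intro hadj; filter_upwards [hadj, ha, hb] with n h1 h2 h3; rw [h2, h3]; exact h1)
  symm := by
    refine ⟨?_⟩
    intro x y
    refine Quotient.inductionOn₂ x y ?_
    intro g h hadj
    exact hadj.mono fun n hn => hn.symm
  loopless := by
    refine ⟨?_⟩
    intro x
    refine Quotient.inductionOn x ?_
    intro g hadj
    obtain ⟨n, hn⟩ := hadj.exists
    exact (Gs n).irrefl hn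

/-! ### Graph classes and class limits -/

/-- A class of graphs: a predicate on graphs over arbitrary vertex types. -/
def GraphClass : Type 1 := ∀ V : Type, SimpleGraph V → Prop

/-- `C` is a class of finite graphs. -/
def FiniteClass (C : GraphClass) : Prop :=
  ∀ (V : Type) (G : SimpleGraph V), C V G → Finite V

/-- `H` is (isomorphic to) a subgraph of `G`. -/
def IsSubgraphOf {W V : Type} (H : SimpleGraph W) (G : SimpleGraph V) : Prop :=
  ∃ f : W → V, Function.Injective f ∧ ∀ ⦃u v : W⦄, H.Adj u v → G.Adj (f u) (f v)

/-- Membership in the class limit `C*`: subgraphs of ultraproducts of sequences from `C`. -/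
def InLimit (U : Ultrafilter ℕ) (C : GraphClass) {W : Type} (H : SimpleGraph W) : Prop :=
  ∃ (Vs : ℕ → Type) (Gs : ∀ n, SimpleGraph (Vs n)),
    (∀ n, C (Vs n) (Gs n)) ∧ IsSubgraphOf H (UGraph U Gs)

/-- `H ∈ C ▽ d`. -/
def InClassMinor (C : GraphClass) (d : ℕ) {W : Type} (H : SimpleGraph W) : Prop :=
  ∃ (V : Type) (G : SimpleGraph V), C V G ∧ IsShallowMinor G H d

/-- `H ∈ C ∇̃ d`. -/
def InClassTopMinor (C : GraphClass) (d : ℕ) {W : Type} (H : SimpleGraph W) : Prop :=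
  ∃ (V : Type) (G : SimpleGraph V), C V G ∧ IsTopShallowMinor G H d

/-- `H ∈ C* ▽ d`. -/
def InLimitMinor (U : Ultrafilter ℕ) (C : GraphClass) (d : ℕ) {W : Type}
    (H : SimpleGraph W) : Prop :=
  ∃ (V : Type) (G : SimpleGraph V), InLimit U C G ∧ IsShallowMinor G H d

/-- `H ∈ C* ∇̃ d`. -/
def InLimitTopMinor (U : Ultrafilter ℕ) (C : GraphClass) (d : ℕ) {W : Type}
    (H : SimpleGraph W) : Prop :=
  ∃ (V : Type) (G : SimpleGraph V), InLimit U C G ∧ IsTopShallowMinor G H d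

/-- `C` is somewhere dense: all finite graphs are shallow minors at some fixed depth. -/
def SomewhereDense (C : GraphClass) : Prop :=
  ∃ d : ℕ, ∀ (W : Type) (H : SimpleGraph W), Finite W → InClassMinor C d H

/-- `C` is topologically somewhere dense. -/
def TopSomewhereDense (C : GraphClass) : Prop :=
  ∃ d : ℕ, ∀ (W : Type) (H : SimpleGraph W), Finite W → InClassTopMinor C d H

/-- The countably infinite clique `K_ω`. -/
def Komega : SimpleGraph ℕ := ⊤

/-- The clique on continuum many vertices `K_𝔠`. -/
def Kcontinuum : SimpleGraph (Set ℕ) := ⊤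

/-- `C` is hereditary: closed under induced subgraphs. -/
def Hereditary (C : GraphClass) : Prop :=
  ∀ (V : Type) (G : SimpleGraph V), C V G →
    ∀ (W : Type) (f : W → V), Function.Injective f → C W (G.comap f)

/-! ### Scattered sets and quasi-wideness -/

/-- `X` is a `d`-scattered set of `G - S`: it avoids `S`, and any two distinct vertices of `X`
are at distance greater than `2d` in `G - S` (every connecting walk avoiding `S` is longer
than `2d`). -/
def ScatteredIn {V : Type} (G : SimpleGraph V) (d : ℕ) (S X : Set V) : Prop :=
  Disjoint X S ∧ ∀ u ∈ X, ∀ v ∈ X, u ≠ v →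
    ∀ p : G.Walk u v, (∀ x ∈ p.support, x ∉ S) → 2 * d < p.length

/-- `C` is quasi-wide with margin `s`. -/
def QuasiWide (C : GraphClass) (s : ℕ → ℕ) : Prop :=
  ∀ d m : ℕ, ∃ N : ℕ, ∀ (V : Type) (G : SimpleGraph V), C V G → N ≤ Nat.card V →
    ∃ S X : Set V, S.Finite ∧ S.ncard ≤ s d ∧ X.Finite ∧ X.ncard = m ∧ ScatteredIn G d S X

/-- `C` is uniformly quasi-wide with margin `s`. -/
def UniformlyQuasiWide (C : GraphClass) (s : ℕ → ℕ) : Prop :=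
  ∀ d m : ℕ, ∃ N : ℕ, ∀ (V : Type) (G : SimpleGraph V), C V G →
    ∀ W : Set V, N ≤ W.ncard →
      ∃ S X : Set V, S.Finite ∧ S.ncard ≤ s d ∧ X ⊆ W ∧ X.Finite ∧ X.ncard = m ∧
        ScatteredIn G d S X

/-- `C` is limit quasi-wide. -/
def LimitQW (U : Ultrafilter ℕ) (C : GraphClass) : Prop :=
  ∀ (d : ℕ) (V : Type) (G : SimpleGraph V), InLimit U C G → Infinite V →
    ∃ S X : Set V, S.Finite ∧ X.Infinite ∧ ScatteredIn G d S X

/-- `C` is uniformly limit quasi-wide. -/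
def UniformLimitQW (U : Ultrafilter ℕ) (C : GraphClass) : Prop :=
  ∀ (d : ℕ) (V : Type) (G : SimpleGraph V), InLimit U C G →
    ∀ W : Set V, W.Infinite →
      ∃ S X : Set V, S.Finite ∧ X ⊆ W ∧ X.Infinite ∧ ScatteredIn G d S X

/-- `C` is strongly limit quasi-wide with margin `s`. -/
def StrongLimitQW (U : Ultrafilter ℕ) (C : GraphClass) (s : ℕ → ℕ) : Prop :=
  ∀ (d : ℕ) (V : Type) (G : SimpleGraph V), InLimit U C G → Infinite V →
    ∃ S X : Set V, S.Finite ∧ S.ncard ≤ s d ∧ X.Infinite ∧ ScatteredIn G d S X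

/-- `C` is strongly uniformly limit quasi-wide with margin `s`. -/
def StrongUniformLimitQW (U : Ultrafilter ℕ) (C : GraphClass) (s : ℕ → ℕ) : Prop :=
  ∀ (d : ℕ) (V : Type) (G : SimpleGraph V), InLimit U C G →
    ∀ W : Set V, W.Infinite →
      ∃ S X : Set V, S.Finite ∧ S.ncard ≤ s d ∧ X ⊆ W ∧ X.Infinite ∧ ScatteredIn G d S X

/-! ### The splitter game -/

/-- One round of the splitter game: from arena `A`, connector picks `v`, splitter picks `W`;
the new arena consists of the vertices of `A` outside `W` at distance at most `d` from `v`
in the subgraph induced by `A`. -/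
def arenaStep {V : Type} (G : SimpleGraph V) (d : ℕ) (A : Set V) (v : V) (W : Set V) : Set V :=
  {x | x ∈ A ∧ x ∉ W ∧ ∃ p : G.Walk v x, p.length ≤ d ∧ ∀ y ∈ p.support, y ∈ A}

/-- The arena after a (chronological) history of moves. -/
def arenaAfter {V : Type} (G : SimpleGraph V) (d : ℕ) (hist : List (V × Set V)) : Set V :=
  hist.foldl (fun A mv => arenaStep G d A mv.1 mv.2) Set.univ

/-- A strategy for splitter: given the history and connector's new move, produce a set. -/
def SplitterStrategy (V : Type) : Type := List (V × Set V) → V → Set V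

/-- The history of the play where connector plays `c` and splitter follows `σ`. -/
def splitterHist {V : Type} (σ : SplitterStrategy V) (c : ℕ → V) : ℕ → List (V × Set V)
  | 0 => []
  | n + 1 => splitterHist σ c n ++ [(c n, σ (splitterHist σ c n) (c n))]

/-- Connector's first `n` moves are valid (inside the successive arenas). -/
def ConsistentPlay {V : Type} (G : SimpleGraph V) (d : ℕ) (σ : SplitterStrategy V)
    (c : ℕ → V) (n : ℕ) : Prop :=
  ∀ k < n, c k ∈ arenaAfter G d (splitterHist σ c k)

/-- `σ` is a winning strategy for splitter in the limit `d`-splitter game on `G`: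
its moves are valid (finite subsets of the arena) along any consistent play, and no
infinite sequence of valid connector moves exists. -/
def SplitterWinsLimit {V : Type} (G : SimpleGraph V) (d : ℕ) (σ : SplitterStrategy V) : Prop :=
  (∀ (c : ℕ → V) (n : ℕ), ConsistentPlay G d σ c (n + 1) →
      (σ (splitterHist σ c n) (c n)).Finite ∧
      σ (splitterHist σ c n) (c n) ⊆ arenaAfter G d (splitterHist σ c n)) ∧
  (∀ c : ℕ → V, ∃ n : ℕ, c n ∉ arenaAfter G d (splitterHist σ c n))

/-- `σ` is a winning strategy for splitter in the `(ℓ, m, d)`-splitter game on `G`. -/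
def SplitterWinsGame {V : Type} (G : SimpleGraph V) (l m d : ℕ) (σ : SplitterStrategy V) :
    Prop :=
  (∀ (c : ℕ → V) (n : ℕ), ConsistentPlay G d σ c (n + 1) →
      (σ (splitterHist σ c n) (c n)).Finite ∧
      (σ (splitterHist σ c n) (c n)).ncard ≤ m ∧
      σ (splitterHist σ c n) (c n) ⊆ arenaAfter G d (splitterHist σ c n)) ∧
  (∀ c : ℕ → V, ∃ n ≤ l, c n ∉ arenaAfter G d (splitterHist σ c n))

/-- A strategy for connector: given the history, produce a vertex. -/
def ConnectorStrategy (V : Type) : Type := List (V × Set V) → V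

/-- The history of the play where connector follows `τ` and splitter plays `w`. -/
def connectorHist {V : Type} (τ : ConnectorStrategy V) (w : ℕ → Set V) :
    ℕ → List (V × Set V)
  | 0 => []
  | n + 1 => connectorHist τ w n ++ [(τ (connectorHist τ w n), w n)]

/-- `τ` is a winning strategy for connector in the limit `d`-splitter game on `G`:
as long as splitter's moves are valid, connector's moves stay in the arena forever. -/
def ConnectorWinsLimit {V : Type} (G : SimpleGraph V) (d : ℕ) (τ : ConnectorStrategy V) :
    Prop :=
  ∀ (w : ℕ → Set V) (n : ℕ),
    (∀ k < n, (w k).Finite ∧ w k ⊆ arenaAfter G d (connectorHist τ w k)) →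
    τ (connectorHist τ w n) ∈ arenaAfter G d (connectorHist τ w n)

/-- `τ` is a winning strategy for connector in the `(ℓ, m, d)`-splitter game on `G`:
the arena stays nonempty for `ℓ` rounds, i.e. connector has valid moves at rounds `0,…,ℓ`. -/
def ConnectorWinsGame {V : Type} (G : SimpleGraph V) (l m d : ℕ) (τ : ConnectorStrategy V) :
    Prop :=
  ∀ (w : ℕ → Set V) (n : ℕ), n ≤ l →
    (∀ k < n, (w k).Finite ∧ (w k).ncard ≤ m ∧
      w k ⊆ arenaAfter G d (connectorHist τ w k)) →
    τ (connectorHist τ w n) ∈ arenaAfter G d (connectorHist τ w n)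

/-- `C` is winning for splitter. -/
def WinningForSplitter (C : GraphClass) : Prop :=
  ∀ d : ℕ, ∃ l m : ℕ, ∀ (V : Type) (G : SimpleGraph V), C V G →
    ∃ σ : SplitterStrategy V, SplitterWinsGame G l m d σ

/-- `C` is limit winning for splitter. -/
def LimitWinningForSplitter (U : Ultrafilter ℕ) (C : GraphClass) : Prop :=
  ∀ (d : ℕ) (V : Type) (G : SimpleGraph V), InLimit U C G →
    ∃ σ : SplitterStrategy V, SplitterWinsLimit G d σ

/-! ### First-order satisfaction in graphs -/

/-- `G` satisfies the first-order sentence `φ` in the language of graphs. -/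
def GSat {V : Type} (G : SimpleGraph V) (φ : FirstOrder.Language.graph.Sentence) : Prop :=
  @FirstOrder.Language.Sentence.Realize FirstOrder.Language.graph V G.structure φ

/-!
Enumerate the vertices still to be chosen (the branch vertices `f n` and, for each ordered pair
`(p, q)`, an out-neighbour of `f p` reserved for the edge `pq`) along `ℕ` so that every vertex
comes after the branch vertex it hangs off. Since each out-neighbourhood is infinite, the
vertices can be chosen greedily in this order, each avoiding the finitely many chosen before;
the edge `pq` is then routed through the two out-neighbours reserved for `(p, q)` and `(q, p)`. -/

section Greedy

open Function Set

theorem exists_injective_forall_mem_of_infinite {A : Type} [Nonempty A]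
    (S : ℕ → (ℕ → A) → Set A) (hS : ∀ i g, (S i g).Infinite)
    (hpast : ∀ i g g', EqOn g g' (Iio i) → S i g = S i g') :
    ∃ g : ℕ → A, Injective g ∧ ∀ i, g i ∈ S i g := by
  have hfresh : ∀ i g, ∃ b ∈ S i g, b ∉ g '' Iio i := fun i g =>
    ((hS i g).sdiff ((finite_Iio i).image g)).nonempty
  choose pick hpick_mem hpick_fresh using hfresh
  let past (i : ℕ) (prev : ∀ j < i, A) : ℕ → A :=
    fun j => if h : j < i then prev j h else Classical.arbitrary A
  let g : ℕ → A := Nat.strongRec (motive := fun _ => A) fun i prev => pick i (past i prev)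
  have hg : ∀ i, g i = pick i (past i fun j _ => g j) := Nat.strongRec_eq _
  have hpast_g : ∀ i, EqOn (past i fun j _ => g j) g (Iio i) := fun i j hj => dif_pos hj
  have hg_fresh : ∀ i, g i ∉ g '' Iio i := fun i => by
    rw [hg i, ← (hpast_g i).image_eq]
    exact hpick_fresh _ _
  refine ⟨g, fun i j hij => ?_, fun i => ?_⟩
  · rcases lt_trichotomy i j with hlt | heq | hlt
    · exact absurd ⟨i, hlt, hij⟩ (hg_fresh j)
    · exact heq
    · exact absurd ⟨j, hlt, hij.symm⟩ (hg_fresh i)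
  · rw [hg i, ← hpast i _ _ (hpast_g i)]
    exact hpick_mem _ _

/-- Branch vertices are indexed by `inl n`, the out-neighbour of `inl p` reserved for the edge
`pq` by `inr (p, q)`; these are enumerated as `2 * n` and `2 * Nat.pair p q + 1`, which puts
`inr (p, q)` after `inl p` because `p ≤ Nat.pair p q`. -/
theorem exists_injective_sum_rel {A : Type} [Infinite A] (R : A → A → Prop)
    (hout : ∀ a : A, {b : A | R a b}.Infinite) :
    ∃ e : ℕ ⊕ ℕ × ℕ → A, Injective e ∧ ∀ p q : ℕ, R (e (.inl p)) (e (.inr (p, q))) := by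
  let index : ℕ ⊕ ℕ × ℕ → ℕ
    | .inl n => 2 * n
    | .inr (p, q) => 2 * Nat.pair p q + 1
  have hindex : Injective index := by
    rintro (n | ⟨p, q⟩) (n' | ⟨p', q'⟩) h <;> simp only [index] at h
    · rw [show n = n' by omega]
    · omega
    · omega
    · obtain ⟨rfl, rfl⟩ := Nat.pair_eq_pair.mp (by omega : Nat.pair p q = Nat.pair p' q')
      rfl
  let S (i : ℕ) (g : ℕ → A) : Set A :=
    if i % 2 = 0 then univ else {b | R (g (2 * (i / 2).unpair.1)) b}
  have hS : ∀ i g, (S i g).Infinite := fun i g => by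
    unfold S; split_ifs
    exacts [infinite_univ, hout _]
  have hpast : ∀ i g g', EqOn g g' (Iio i) → S i g = S i g' := fun i g g' h => by
    unfold S; split_ifs with hi
    · rfl
    · have := Nat.unpair_left_le (i / 2)
      rw [h (mem_Iio.2 (by omega))]
  obtain ⟨g, hg, hgS⟩ := exists_injective_forall_mem_of_infinite S hS hpast
  refine ⟨g ∘ index, hg.comp hindex, fun p q => ?_⟩
  have := hgS (2 * Nat.pair p q + 1)
  simpa [S, index, Nat.mul_add_div, Nat.unpair_pair] using this

end Greedy

section ArcPath

open Function

variable {V W : Type} {e : W ⊕ W × W → V}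

def arcPath (he : Injective e) {u v : W} (huv : u ≠ v) :
    (⊤ : SimpleGraph V).Walk (e (.inl u)) (e (.inl v)) :=
  .cons ((top_adj _ _).2 (he.ne Sum.inl_ne_inr))
    (.cons ((top_adj _ _).2 (he.ne (a₁ := .inr (u, v)) (a₂ := .inr (v, u)) (by simp [huv])))
      (.cons ((top_adj _ _).2 (he.ne Sum.inr_ne_inl)) .nil))

variable (he : Injective e)

theorem arcPath_support {u v : W} (huv : u ≠ v) :
    (arcPath he huv).support = [.inl u, .inr (u, v), .inr (v, u), .inl v].map e := rfl

theorem arcPath_isPath {u v : W} (huv : u ≠ v) : (arcPath he huv).IsPath := by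
  rw [Walk.isPath_def, arcPath_support]
  exact List.Nodup.map he (by simp [huv, huv.symm])

theorem arcPath_symm {u v : W} (huv : u ≠ v) :
    arcPath he huv.symm = (arcPath he huv).reverse :=
  Walk.ext_support (by simp [arcPath_support, Walk.support_reverse])

theorem arcPath_inter_support {u v u' v' : W} (huv : u ≠ v) (huv' : u' ≠ v')
    (hne : s(u, v) ≠ s(u', v')) {x : V} (hx : x ∈ (arcPath he huv).support)
    (hx' : x ∈ (arcPath he huv').support) :
    (x = e (.inl u) ∨ x = e (.inl v)) ∧ (x = e (.inl u') ∨ x = e (.inl v')) := by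
  rw [arcPath_support, List.mem_map] at hx hx'
  obtain ⟨s, hs, rfl⟩ := hx
  obtain ⟨s', hs', hss'⟩ := hx'
  obtain rfl := he hss'
  simp only [ne_eq, Sym2.eq_iff, not_or, not_and] at hne
  simp only [List.mem_cons, List.not_mem_nil, or_false] at hs hs'
  rcases hs with rfl | rfl | rfl | rfl <;> rcases hs' with h | h | h | h <;> simp_all

theorem isTopMinorModel_arcPath (H : SimpleGraph W) :
    IsTopMinorModel ⊤ H 1 (e ∘ .inl) fun _ _ h => arcPath he h.ne :=
  ⟨he.comp Sum.inl_injective, fun _ _ h => arcPath_isPath he h.ne, fun _ _ _ => le_rfl,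
    fun _ _ h => arcPath_symm he h.ne,
    fun _ _ _ _ h h' hne _ hx hx' => arcPath_inter_support he h.ne h'.ne hne hx hx'⟩

end ArcPath

/-- If `K` is an infinite clique and `R` is a directed graph on the same
vertex set in which every vertex has infinite outdegree, then there is a `1`-shallow
topological minor model of `K_ω` in `K` all of whose paths are compatible with `R`: each
path has the form `f p − x − y − f q` with `(f p, x) ∈ E(R)` and `(f q, y) ∈ E(R)`. -/
theorem greedy_model (A : Type) [Infinite A] (R : A → A → Prop)
    (hout : ∀ a : A, {b : A | R a b}.Infinite) :
    ∃ (f : ℕ → A) (P : ∀ ⦃p q : ℕ⦄, Komega.Adj p q →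
        (⊤ : SimpleGraph A).Walk (f p) (f q)),
      IsTopMinorModel (⊤ : SimpleGraph A) Komega 1 f P ∧
      ∀ ⦃p q : ℕ⦄ (h : Komega.Adj p q),
        ∃ x y : A, R (f p) x ∧ R (f q) y ∧ (P h).support = [f p, x, y, f q] := by
  obtain ⟨e, he, hR⟩ := exists_injective_sum_rel R hout
  refine ⟨e ∘ .inl, fun _ _ h => arcPath he h.ne, isTopMinorModel_arcPath he Komega,
    fun p q h => ⟨e (.inr (p, q)), e (.inr (q, p)), hR p q, hR q p, arcPath_support he h.ne⟩⟩

end NWD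
end

section
/- Let d ∈ ℕ and let G be a graph. If some infinite clique is a shallow minor of G at depth d, then the countably infinite clique K_ω is a topological shallow minor of G at depth 3d+1. -/
/-!
Split the branch sets of the clique model into principal sets `Bᵢ` and auxiliary sets `Bᵢₖ`.
Each `Bᵢ` has a port towards every `Bᵢₖ`, at distance at most `d` from its centre. Pruning the
walks from the centre to the ports yields a hub `uᵢ ∈ Bᵢ` and infinitely many walks of length at
most `d` from `uᵢ` to ports that pairwise meet only at `uᵢ`. For `i ≠ j`, go from `uᵢ` along
such a walk into a private auxiliary set of `i`, across to a private auxiliary set of `j`, and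
back along a walk of the fan of `j` to `uⱼ`: this has length `d + 1 + (4d + 1) + 1 + d`, which
is `2(3d + 1) + 1`, and the paths of different pairs meet only at hubs.
-/

open Function

theorem Set.exists_embedding_pairwise_inter_subset {ι α : Type*} [Infinite ι] (S : ι → Set α)
    (K : Set α) (hS : ∀ k, (S k).Finite) (hK : ∀ y ∉ K, {k | y ∈ S k}.Finite) :
    ∃ e : ℕ ↪ ι, Pairwise fun m m' => S (e m) ∩ S (e m') ⊆ K := by
  let r : ι → ι → Prop := fun k k' => k ≠ k' ∧ S k ∩ S k' ⊆ K
  have : Std.Symm r := ⟨fun k k' h => ⟨h.1.symm, Set.inter_comm (S k) _ ▸ h.2⟩⟩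
  obtain ⟨e, -, he⟩ := exists_seq_of_forall_finset_exists' (fun _ => True) r fun s _ => by
    have hbad : (↑s ∪ ⋃ k ∈ s, ⋃ y ∈ S k \ K, {k' | y ∈ S k'}).Finite :=
      s.finite_toSet.union <| s.finite_toSet.biUnion fun k _ =>
        (hS k).sdiff.biUnion fun y hy => hK y hy.2
    obtain ⟨k', hk'⟩ := hbad.infinite_compl.nonempty
    simp only [Set.mem_compl_iff, Set.mem_union, Set.mem_iUnion, not_or, not_exists] at hk'
    refine ⟨k', trivial, fun k hk => ⟨fun h => hk'.1 (h ▸ hk), fun y hy => ?_⟩⟩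
    by_contra hyK
    exact hk'.2 k hk y ⟨hy.1, hyK⟩ hy.2
  exact ⟨⟨e, fun m m' h => by_contra fun hne => (he hne).1 h⟩, fun m m' h => (he h).2⟩

namespace SimpleGraph

variable {V : Type*} {G : SimpleGraph V}

/-- Either some vertex other than `c` lies on infinitely many of the walks, and we recurse on
the shorter walks starting there, or the walks are locally finite and a greedy choice leaves
infinitely many of them that pairwise meet only at `c`. -/
theorem Walk.exists_fan {ι : Type*} [Infinite ι] {c : V} {x : ι → V} (q : ∀ k, G.Walk c (x k))
    {n : ℕ} (hq : ∀ k, (q k).length ≤ n) :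
    ∃ (u : V) (e : ℕ ↪ ι) (t : ∀ m, G.Walk u (x (e m))),
      (∀ m, (t m).length ≤ n) ∧ (∀ m, (t m).support ⊆ (q (e m)).support) ∧
      Pairwise fun m m' => {y | y ∈ (t m).support} ∩ {y | y ∈ (t m').support} ⊆ {u} := by
  classical
  induction n using Nat.strong_induction_on generalizing ι c x with
  | _ n ih =>
  by_cases hdense : ∃ y ≠ c, {k | y ∈ (q k).support}.Infinite
  · obtain ⟨y, hyc, hinf⟩ := hdense
    have := hinf.to_subtype
    let q' : ∀ k : {k | y ∈ (q k).support}, G.Walk y (x k) := fun k => (q k).dropUntil y k.2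
    have hq' : ∀ k, (q' k).length < n := fun k =>
      (Walk.length_dropUntil_lt_length k.2 hyc).trans_le (hq k)
    obtain ⟨k₀⟩ := hinf.nonempty.to_subtype
    obtain ⟨u, e, t, hlen, hsub, hinter⟩ :=
      ih (n - 1) (by have := hq' k₀; omega) q' fun k => by have := hq' k; omega
    exact ⟨u, e.trans (Function.Embedding.subtype _), t, fun m => (hlen m).trans (by omega),
      fun m _ hy => Walk.support_dropUntil_subset_support _ _ (hsub m hy), hinter⟩
  · push Not at hdense
    obtain ⟨e, he⟩ := Set.exists_embedding_pairwise_inter_subset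
      (fun k => {y | y ∈ (q k).support}) {c} (fun k => (q k).support.finite_toSet) hdense
    exact ⟨c, e, fun m => q (e m), fun m => hq (e m), fun m => List.Subset.refl _, he⟩

end SimpleGraph

theorem Set.union_inter_union_subset_singleton_of_pairwise_disjoint {α ι κ ν : Type*}
    {B : ι ⊕ κ → Set α} (hB : Pairwise (Disjoint on B)) {aux : ι × ν → κ} (haux : Injective aux)
    {T : ι × ν → Set α} (hT : ∀ p, T p ⊆ B (.inl p.1)) {u : ι → α}
    (hTu : ∀ i j j', j ≠ j' → T (i, j) ∩ T (i, j') ⊆ {u i}) {p p' : ι × ν} (hpp' : p ≠ p') :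
    (T p ∪ B (.inr (aux p))) ∩ (T p' ∪ B (.inr (aux p'))) ⊆ {u p.1} := by
  obtain ⟨i, j⟩ := p
  obtain ⟨i', j'⟩ := p'
  rintro y ⟨hy | hy, hy' | hy'⟩
  · by_cases hi : i = i'
    · subst hi
      exact hTu i j j' (fun h => hpp' (h ▸ rfl)) ⟨hy, hy'⟩
    · exact absurd (hT _ hy') (Set.disjoint_left.1 (hB (by simpa using hi)) (hT _ hy))
  · exact absurd hy' (Set.disjoint_left.1 (hB Sum.inl_ne_inr) (hT _ hy))
  · exact absurd hy (Set.disjoint_left.1 (hB Sum.inl_ne_inr) (hT _ hy'))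
  · exact absurd hy' (Set.disjoint_left.1 (hB (by simpa using haux.ne hpp')) hy)

namespace NWD

open SimpleGraph

variable {V W : Type} {G : SimpleGraph V} {H : SimpleGraph W} {d : ℕ} {α : W → G.Subgraph}

namespace IsShallowMinorModel

theorem comp (hα : IsShallowMinorModel G H d α) {W' : Type} {H' : SimpleGraph W'} (f : H' ↪g H) :
    IsShallowMinorModel G H' d (α ∘ f) :=
  ⟨fun w => hα.1 (f w), fun _ _ hne => hα.2.1 _ _ (f.injective.ne hne),
    fun _ _ h => hα.2.2 _ _ (f.map_adj_iff.2 h)⟩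

theorem exists_center (hα : IsShallowMinorModel G H d α) (w : W) :
    ∃ c ∈ (α w).verts, ∀ x ∈ (α w).verts,
      ∃ p : G.Walk c x, p.length ≤ d ∧ ∀ y ∈ p.support, y ∈ (α w).verts := by
  obtain ⟨⟨c, hc⟩, hwalk⟩ := hα.1 w
  refine ⟨c, hc, fun x hx => ?_⟩
  obtain ⟨p, hp⟩ := hwalk ⟨x, hx⟩
  refine ⟨p.map (α w).hom, (Walk.length_map _ _).trans_le hp, fun y hy => ?_⟩
  obtain ⟨⟨z, hz⟩, -, rfl⟩ := List.mem_map.1 (Walk.support_map _ p ▸ hy)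
  exact hz

theorem exists_walk_of_mem (hα : IsShallowMinorModel G H d α) (w : W) {y z : V}
    (hy : y ∈ (α w).verts) (hz : z ∈ (α w).verts) :
    ∃ p : G.Walk y z, p.length ≤ 2 * d ∧ ∀ v ∈ p.support, v ∈ (α w).verts := by
  obtain ⟨c, -, hc⟩ := hα.exists_center w
  obtain ⟨p, hp, hps⟩ := hc y hy
  obtain ⟨q, hq, hqs⟩ := hc z hz
  refine ⟨p.reverse.append q, by simp only [Walk.length_append, Walk.length_reverse]; omega,
    fun v hv => ?_⟩
  rw [Walk.mem_support_append_iff, Walk.support_reverse, List.mem_reverse] at hv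
  exact hv.elim (hps v) (hqs v)

theorem exists_walk_of_adj (hα : IsShallowMinorModel G H d α) {w w' : W} (hww' : H.Adj w w')
    {y y' : V} (hy : y ∈ (α w).verts) (hy' : y' ∈ (α w').verts) :
    ∃ p : G.Walk y y', p.length ≤ 4 * d + 1 ∧
      ∀ v ∈ p.support, v ∈ (α w).verts ∨ v ∈ (α w').verts := by
  obtain ⟨x, hx, x', hx', hxx'⟩ := hα.2.2 w w' hww'
  obtain ⟨p, hp, hps⟩ := hα.exists_walk_of_mem w hy hx
  obtain ⟨q, hq, hqs⟩ := hα.exists_walk_of_mem w' hx' hy'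
  refine ⟨p.append (.cons hxx' q), by simp only [Walk.length_append, Walk.length_cons]; omega,
    fun v hv => ?_⟩
  rw [Walk.mem_support_append_iff, Walk.support_cons, List.mem_cons] at hv
  rcases hv with hv | hv | hv
  exacts [.inl (hps v hv), .inl (hv ▸ hx), .inr (hqs v hv)]

theorem exists_fan (hα : IsShallowMinorModel G H d α) (w : W) {x : ℕ → V}
    (hx : ∀ k, x k ∈ (α w).verts) :
    ∃ (u : V) (e : ℕ ↪ ℕ) (t : ∀ m, G.Walk u (x (e m))),
      (∀ m, (t m).length ≤ d) ∧ (∀ m, ∀ y ∈ (t m).support, y ∈ (α w).verts) ∧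
      Pairwise fun m m' => {y | y ∈ (t m).support} ∩ {y | y ∈ (t m').support} ⊆ {u} := by
  obtain ⟨c, -, hc⟩ := hα.exists_center w
  choose q hq hqs using fun k => hc (x k) (hx k)
  obtain ⟨u, e, t, hlen, hsub, hinter⟩ := Walk.exists_fan q hq
  exact ⟨u, e, t, hlen, fun m y hy => hqs _ y (hsub m hy), hinter⟩

end IsShallowMinorModel

/-- `side i j` is the half of the path from `f i` to `f j` that belongs to `i`. -/
theorem isTopShallowMinor_of_sides [LinearOrder W] {D : ℕ} {f : W → V} (hf : Injective f)
    (side : W → W → Set V)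
    (hside : ∀ i j i' j', (i, j) ≠ (i', j') → side i j ∩ side i' j' ⊆ {f i})
    (hwalk : ∀ i j, H.Adj i j → ∃ p : G.Walk (f i) (f j),
      p.length ≤ 2 * D + 1 ∧ ∀ y ∈ p.support, y ∈ side i j ∪ side j i) :
    IsTopShallowMinor G H D := by
  classical
  choose p hlen hsupp using hwalk
  let P : ∀ ⦃i j⦄, H.Adj i j → G.Walk (f i) (f j) := fun i j h =>
    if i < j then (p i j h).bypass else (p j i h.symm).bypass.reverse
  have hP : ∀ ⦃i j⦄ (h : H.Adj i j), ∀ y ∈ (P h).support, y ∈ side i j ∪ side j i := by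
    intro i j h y hy
    by_cases hij : i < j
    · simp only [P, if_pos hij] at hy
      exact hsupp i j h y (Walk.support_bypass_subset_support _ hy)
    · simp only [P, if_neg hij, Walk.support_reverse, List.mem_reverse] at hy
      exact Set.union_comm _ _ ▸ hsupp j i h.symm y (Walk.support_bypass_subset_support _ hy)
  have hmeet : ∀ i j i' j', (i, j) ≠ (i', j') → ∀ y ∈ side i j, y ∈ side i' j' →
      y = f i ∧ y = f i' := fun i j i' j' hne y hy hy' =>
    ⟨hside i j i' j' hne ⟨hy, hy'⟩, hside i' j' i j hne.symm ⟨hy', hy⟩⟩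
  refine ⟨f, P, hf, fun i j h => ?_, fun i j h => ?_, fun i j h => ?_, ?_⟩
  · by_cases hij : i < j
    · simpa only [P, if_pos hij] using Walk.bypass_isPath _
    · simpa only [P, if_neg hij, Walk.isPath_reverse_iff] using Walk.bypass_isPath _
  · by_cases hij : i < j
    · simpa only [P, if_pos hij] using (Walk.length_bypass_le_length _).trans (hlen i j h)
    · simpa only [P, if_neg hij, Walk.length_reverse] using
        (Walk.length_bypass_le_length _).trans (hlen j i h.symm)
  · rcases lt_or_gt_of_ne h.ne with hij | hij
    · simp [P, hij, hij.not_gt]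
    · simp [P, hij, hij.not_gt]
  · intro i j i' j' h h' hs y hy hy'
    have hne : ∀ a b a' b', s(a, b) = s(i, j) → s(a', b') = s(i', j') → (a, b) ≠ (a', b') :=
      fun a b a' b' hab hab' heq => hs (by simp only [Prod.mk.injEq] at heq; grind)
    rcases hP h y hy with hy | hy <;> rcases hP h' y hy' with hy' | hy'
    · have := hmeet _ _ _ _ (hne _ _ _ _ rfl rfl) y hy hy'; tauto
    · have := hmeet _ _ _ _ (hne _ _ _ _ rfl Sym2.eq_swap) y hy hy'; tauto
    · have := hmeet _ _ _ _ (hne _ _ _ _ Sym2.eq_swap rfl) y hy hy'; tauto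
    · have := hmeet _ _ _ _ (hne _ _ _ _ Sym2.eq_swap Sym2.eq_swap) y hy hy'; tauto

theorem IsShallowMinorModel.isTopShallowMinor_komega {β : ℕ ⊕ ℕ × ℕ → G.Subgraph}
    (hβ : IsShallowMinorModel G ⊤ d β) : IsTopShallowMinor G Komega (3 * d + 1) := by
  choose px hpx py hpy hport using fun i k => hβ.2.2 (.inl i) (.inr (i, k)) (by simp)
  choose u e t hlen hsupp hinter using fun i => hβ.exists_fan (.inl i) (hpx i)
  have hu : ∀ i, u i ∈ (β (.inl i)).verts := fun i => hsupp i 0 _ (t i 0).start_mem_support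
  refine isTopShallowMinor_of_sides (f := u) (fun i i' h => ?_)
    (fun i j => {y | y ∈ (t i j).support} ∪ (β (.inr (i, e i j))).verts) (fun i j i' j' h => ?_)
    (fun i j h => ?_)
  · by_contra hne
    exact Set.disjoint_left.1 (hβ.2.1 _ _ (by simpa using hne)) (hu i) (h ▸ hu i')
  · exact Set.union_inter_union_subset_singleton_of_pairwise_disjoint (B := fun w => (β w).verts)
      (fun w w' hw => hβ.2.1 w w' hw) (aux := fun p => (p.1, e p.1 p.2))
      (fun p p' hp => by simp only [Prod.mk.injEq] at hp; grind [(e _).injective.eq_iff])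
      (T := fun p => {y | y ∈ (t p.1 p.2).support}) (fun p y hy => hsupp _ _ _ hy)
      (fun i j j' hj => hinter i hj) h
  · obtain ⟨q, hq, hqs⟩ := hβ.exists_walk_of_adj (w := .inr (i, e i j)) (w' := .inr (j, e j i))
      (by simp [h.ne]) (hpy i (e i j)) (hpy j (e j i))
    refine ⟨(t i j).append (.cons (hport i (e i j))
      (q.append (.cons (hport j (e j i)).symm (t j i).reverse))), ?_, fun y hy => ?_⟩
    · simp only [Walk.length_append, Walk.length_cons, Walk.length_reverse]
      have := hlen i j
      have := hlen j i
      omega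
    · simp only [Walk.mem_support_append_iff, Walk.support_cons, List.mem_cons,
        Walk.support_reverse, List.mem_reverse] at hy
      rcases hy with hy | rfl | hy | rfl | hy
      · exact .inl (.inl hy)
      · exact .inl (.inl (t i j).end_mem_support)
      · exact (hqs y hy).imp .inr .inr
      · exact .inr (.inr (hpy j (e j i)))
      · exact .inr (.inl hy)

/-- If some infinite clique is a shallow minor of `G` at depth `d`, then
`K_ω` is a topological shallow minor of `G` at depth `3d + 1`. -/
theorem infinite_clique_minor_to_top {V : Type} (G : SimpleGraph V) (d : ℕ)
    (h : ∃ (A : Type) (_ : Infinite A), IsShallowMinor G (⊤ : SimpleGraph A) d) :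
    IsTopShallowMinor G Komega (3 * d + 1) := by
  obtain ⟨A, _, α, hα⟩ := h
  let ι : ℕ ⊕ ℕ × ℕ ↪ A := (Denumerable.eqv _).toEmbedding.trans (Infinite.natEmbedding A)
  exact (hα.comp (Embedding.completeGraph ι)).isTopShallowMinor_komega

end NWD
end
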